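/- Let P be one side of a balanced cut (P_A, V_cut, P_B) of G and let b_1, b_2 be border vertices of P. If either (i) d_{G[P]}(b_1, b_2) = d_G(b_1, b_2), or (ii) there exists a third border vertex b_3 of P with d_G(b_1, b_2) = d_G(b_1, b_3) + d_G(b_3, b_2), then the shortcut-enhanced subgraph obtained by omitting the shortcut (b_1, b_2) is still distance-preserving for all pairs of vertices in P. -/

import Mathlib

/-- The weight of a walk in a weighted graph: the sum of the weights of its edges. -/
def walkWeight {V : Type*} {G : SimpleGraph V} (wt : V → V → ℝ) {u v : V}
    (p : G.Walk u v) : ℝ :=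
  (p.darts.map (fun d => wt d.toProd.1 d.toProd.2)).sum

/-!
No edge of the enhanced graph is shorter than the `G`-distance of its ends, so no distance
shrinks. Conversely, a shortest `G`-path between vertices of `P` consists of pieces inside `P`,
which survive in the enhanced graph, and of excursions outside `P`; such an excursion leaves and
re-enters `P` at border vertices `u, v`, so it weighs at least `d u v` and the shortcut `(u, v)`
can replace it. The omitted shortcut `(b₁, b₂)` is replaced by a path inside `P` of weight
`d b₁ b₂` in case (i), and by the two shortcuts through `b₃` in case (ii).
-/

open SimpleGraph

section WalkWeight

variable {V : Type*} {G : SimpleGraph V} (wt : V → V → ℝ)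

@[simp]
lemma walkWeight_nil {u : V} : walkWeight wt (Walk.nil : G.Walk u u) = 0 := rfl

@[simp]
lemma walkWeight_cons {u v w : V} (h : G.Adj u v) (p : G.Walk v w) :
    walkWeight wt (Walk.cons h p) = wt u v + walkWeight wt p := by
  simp [walkWeight]

@[simp]
lemma walkWeight_append {u v w : V} (p : G.Walk u v) (q : G.Walk v w) :
    walkWeight wt (p.append q) = walkWeight wt p + walkWeight wt q := by
  simp [walkWeight, Walk.darts_append]

lemma walkWeight_reverse (hwt : ∀ u v, wt u v = wt v u) {u v : V} (p : G.Walk u v) :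
    walkWeight wt p.reverse = walkWeight wt p := by
  induction p with
  | nil => rfl
  | @cons a b c h p ih =>
    simp only [Walk.reverse_cons, walkWeight_append, walkWeight_cons, walkWeight_nil, ih, hwt b a]
    ring

end WalkWeight

def IsWalkDist {V : Type*} (G : SimpleGraph V) (wt d : V → V → ℝ) : Prop :=
  ∀ x y, IsLeast {r | ∃ p : G.Walk x y, walkWeight wt p = r} (d x y)

namespace IsWalkDist

variable {V : Type*} {G : SimpleGraph V} {wt d : V → V → ℝ}

lemma le_walkWeight (hd : IsWalkDist G wt d) {x y : V} (p : G.Walk x y) :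
    d x y ≤ walkWeight wt p :=
  (hd x y).2 ⟨p, rfl⟩

lemma exists_walkWeight_eq (hd : IsWalkDist G wt d) (x y : V) :
    ∃ p : G.Walk x y, walkWeight wt p = d x y :=
  (hd x y).1

lemma self_eq_zero (hd : IsWalkDist G wt d) (x : V) : d x x = 0 := by
  obtain ⟨p, hp⟩ := hd.exists_walkWeight_eq x x
  -- a closed walk of negative weight could be traversed twice
  have hdouble : d x x ≤ d x x + d x x := by
    simpa [hp] using hd.le_walkWeight (p.append p)
  have hnil : d x x ≤ 0 := hd.le_walkWeight Walk.nil
  linarith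

lemma symm (hd : IsWalkDist G wt d) (hwt : ∀ u v, wt u v = wt v u) (x y : V) :
    d x y = d y x := by
  have hle : ∀ a b, d a b ≤ d b a := fun a b => by
    obtain ⟨p, hp⟩ := hd.exists_walkWeight_eq b a
    simpa [walkWeight_reverse wt hwt, hp] using hd.le_walkWeight p.reverse
  exact (hle x y).antisymm (hle y x)

lemma triangle (hd : IsWalkDist G wt d) (x y z : V) : d x z ≤ d x y + d y z := by
  obtain ⟨p, hp⟩ := hd.exists_walkWeight_eq x y
  obtain ⟨q, hq⟩ := hd.exists_walkWeight_eq y z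
  simpa [hp, hq] using hd.le_walkWeight (p.append q)

lemma le_of_adj (hd : IsWalkDist G wt d) {u v : V} (h : G.Adj u v) : d u v ≤ wt u v := by
  simpa using hd.le_walkWeight (Walk.cons h Walk.nil)

end IsWalkDist

lemma le_walkWeight_of_forall_adj {V : Type*} {H : SimpleGraph V} {w d : V → V → ℝ}
    (hself : ∀ x, d x x ≤ 0) (htri : ∀ x y z, d x z ≤ d x y + d y z)
    (hadj : ∀ ⦃u v⦄, H.Adj u v → d u v ≤ w u v) {x y : V} (q : H.Walk x y) :
    d x y ≤ walkWeight w q := by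
  induction q with
  | nil => simpa using hself _
  | @cons u v z h q ih =>
    rw [walkWeight_cons]
    linarith [htri u v z, hadj h]

section Transfer

variable {V : Type*} {G G' : SimpleGraph V} {wt wt' d : V → V → ℝ} {P B : Set V}

lemma exists_walkWeight_le_of_support_subset
    (hin : ∀ ⦃u v⦄, G.Adj u v → u ∈ P → v ∈ P → G'.Adj u v ∧ wt' u v ≤ wt u v)
    {x y : V} (p : G.Walk x y) (hp : ∀ v ∈ p.support, v ∈ P) :
    ∃ q : G'.Walk x y, walkWeight wt' q ≤ walkWeight wt p := by
  induction p with
  | nil => exact ⟨Walk.nil, le_rfl⟩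
  | @cons u v z h p ih =>
    rw [Walk.support_cons, List.forall_mem_cons] at hp
    obtain ⟨q, hq⟩ := ih hp.2
    obtain ⟨hadj, hle⟩ := hin h hp.1 (hp.2 v p.start_mem_support)
    exact ⟨Walk.cons hadj q, by simp only [walkWeight_cons]; linarith⟩

/-- The second conjunct handles a walk that starts on an excursion outside `P`: it is charged
the distance to the border vertex `v` where the excursion ends. -/
lemma exists_walkWeight_le_of_border (hd : IsWalkDist G wt d)
    (hin : ∀ ⦃u v⦄, G.Adj u v → u ∈ P → v ∈ P → G'.Adj u v ∧ wt' u v ≤ wt u v)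
    (hexit : ∀ ⦃u v⦄, G.Adj u v → u ∈ P → v ∉ P → u ∈ B)
    (hshort : ∀ u ∈ B, ∀ v ∈ B, ∃ q : G'.Walk u v, walkWeight wt' q ≤ d u v)
    {x y : V} (p : G.Walk x y) (hy : y ∈ P) :
    (x ∈ P → ∃ q : G'.Walk x y, walkWeight wt' q ≤ walkWeight wt p) ∧
      (x ∉ P → ∃ v ∈ B, ∃ q : G'.Walk v y, d x v + walkWeight wt' q ≤ walkWeight wt p) := by
  induction p with
  | nil => exact ⟨fun _ => ⟨Walk.nil, le_rfl⟩, fun hx => absurd hy hx⟩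
  | @cons x c y h p ih =>
    obtain ⟨ihP, ihOut⟩ := ih hy
    rw [walkWeight_cons]
    refine ⟨fun hx => ?_, fun hx => ?_⟩
    · by_cases hc : c ∈ P
      · obtain ⟨q, hq⟩ := ihP hc
        obtain ⟨hadj, hle⟩ := hin h hx hc
        exact ⟨Walk.cons hadj q, by rw [walkWeight_cons]; linarith⟩
      · obtain ⟨v, hv, q, hq⟩ := ihOut hc
        obtain ⟨r, hr⟩ := hshort x (hexit h hx hc) v hv
        refine ⟨r.append q, ?_⟩
        rw [walkWeight_append]
        linarith [hd.triangle x c v, hd.le_of_adj h]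
    · by_cases hc : c ∈ P
      · obtain ⟨q, hq⟩ := ihP hc
        exact ⟨c, hexit h.symm hc hx, q, by linarith [hd.le_of_adj h]⟩
      · obtain ⟨v, hv, q, hq⟩ := ihOut hc
        exact ⟨v, hv, q, by linarith [hd.triangle x c v, hd.le_of_adj h]⟩

end Transfer

lemma mem_border_of_adj_of_notMem {V : Type*} {G : SimpleGraph V} {PA PB Vcut P B : Set V}
    (hcover : ∀ v, v ∈ PA ∨ v ∈ PB ∨ v ∈ Vcut) (hsep : ∀ a ∈ PA, ∀ b ∈ PB, ¬ G.Adj a b)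
    (hP : P = PA ∨ P = PB) (hB : B = {v : V | v ∈ P ∧ ∃ c ∈ Vcut, G.Adj v c})
    ⦃u v : V⦄ (h : G.Adj u v) (hu : u ∈ P) (hv : v ∉ P) : u ∈ B := by
  have hvcut : v ∈ Vcut := by
    rcases hcover v with hvA | hvB | hvcut
    · rcases hP with rfl | rfl
      · exact absurd hvA hv
      · exact absurd h.symm (hsep v hvA u hu)
    · rcases hP with rfl | rfl
      · exact absurd h (hsep u hu v hvB)
      · exact absurd hvB hv
    · exact hvcut
  subst hB
  exact ⟨hu, v, hvcut, h⟩

section Shortcut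

variable {V : Type*} {G G' : SimpleGraph V} {wt wt' d : V → V → ℝ} {P B : Set V} {b₁ b₂ : V}

lemma shortcut_adj_and_le_of_adj (hd : IsWalkDist G wt d)
    (hG' : ∀ u v : V, G'.Adj u v ↔ u ≠ v ∧
      ((G.Adj u v ∧ u ∈ P ∧ v ∈ P) ∨
        (u ∈ B ∧ v ∈ B ∧ ¬ ((u = b₁ ∧ v = b₂) ∨ (u = b₂ ∧ v = b₁)))))
    (hwt'B : ∀ u v : V, u ∈ B → v ∈ B → wt' u v = d u v)
    (hwt'E : ∀ u v : V, ¬ (u ∈ B ∧ v ∈ B) → wt' u v = wt u v)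
    ⦃u v : V⦄ (h : G.Adj u v) (hu : u ∈ P) (hv : v ∈ P) :
    G'.Adj u v ∧ wt' u v ≤ wt u v := by
  refine ⟨(hG' u v).2 ⟨h.ne, Or.inl ⟨h, hu, hv⟩⟩, ?_⟩
  by_cases huv : u ∈ B ∧ v ∈ B
  · rw [hwt'B u v huv.1 huv.2]
    exact hd.le_of_adj h
  · rw [hwt'E u v huv]

lemma dist_le_shortcut_weight (hd : IsWalkDist G wt d)
    (hG' : ∀ u v : V, G'.Adj u v ↔ u ≠ v ∧
      ((G.Adj u v ∧ u ∈ P ∧ v ∈ P) ∨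
        (u ∈ B ∧ v ∈ B ∧ ¬ ((u = b₁ ∧ v = b₂) ∨ (u = b₂ ∧ v = b₁)))))
    (hwt'B : ∀ u v : V, u ∈ B → v ∈ B → wt' u v = d u v)
    (hwt'E : ∀ u v : V, ¬ (u ∈ B ∧ v ∈ B) → wt' u v = wt u v)
    ⦃u v : V⦄ (h : G'.Adj u v) : d u v ≤ wt' u v := by
  by_cases huv : u ∈ B ∧ v ∈ B
  · rw [hwt'B u v huv.1 huv.2]
  · rcases ((hG' u v).1 h).2 with ⟨hG, -, -⟩ | ⟨hu, hv, -⟩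
    · rw [hwt'E u v huv]
      exact hd.le_of_adj hG
    · exact absurd ⟨hu, hv⟩ huv

lemma shortcut_weight_symm (hd : IsWalkDist G wt d) (hwt : ∀ u v, wt u v = wt v u)
    (hwt'B : ∀ u v : V, u ∈ B → v ∈ B → wt' u v = d u v)
    (hwt'E : ∀ u v : V, ¬ (u ∈ B ∧ v ∈ B) → wt' u v = wt u v) (u v : V) :
    wt' u v = wt' v u := by
  by_cases huv : u ∈ B ∧ v ∈ B
  · rw [hwt'B u v huv.1 huv.2, hwt'B v u huv.2 huv.1, hd.symm hwt]
  · rw [hwt'E u v huv, hwt'E v u (fun h => huv ⟨h.2, h.1⟩), hwt]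

lemma exists_walkWeight_le_of_redundant (hBP : B ⊆ P)
    (hin : ∀ ⦃u v⦄, G.Adj u v → u ∈ P → v ∈ P → G'.Adj u v ∧ wt' u v ≤ wt u v)
    (dP : V → V → ℝ)
    (hdP : ∀ x ∈ P, ∀ y ∈ P, IsLeast
      {r : ℝ | ∃ p : G.Walk x y, (∀ v ∈ p.support, v ∈ P) ∧ walkWeight wt p = r} (dP x y))
    (hb₁ : b₁ ∈ B) (hb₂ : b₂ ∈ B)
    (hredundant : dP b₁ b₂ = d b₁ b₂ ∨
      ∃ b₃ ∈ B, b₃ ≠ b₁ ∧ b₃ ≠ b₂ ∧ d b₁ b₂ = d b₁ b₃ + d b₃ b₂)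
    (hG' : ∀ u v : V, G'.Adj u v ↔ u ≠ v ∧
      ((G.Adj u v ∧ u ∈ P ∧ v ∈ P) ∨
        (u ∈ B ∧ v ∈ B ∧ ¬ ((u = b₁ ∧ v = b₂) ∨ (u = b₂ ∧ v = b₁)))))
    (hwt'B : ∀ u v : V, u ∈ B → v ∈ B → wt' u v = d u v) :
    ∃ q : G'.Walk b₁ b₂, walkWeight wt' q ≤ d b₁ b₂ := by
  rcases hredundant with hdist | ⟨b₃, hb₃, h31, h32, hsplit⟩
  · obtain ⟨p, hpP, hpw⟩ := (hdP b₁ (hBP hb₁) b₂ (hBP hb₂)).1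
    obtain ⟨q, hq⟩ := exists_walkWeight_le_of_support_subset hin p hpP
    exact ⟨q, by linarith⟩
  · have h13 : G'.Adj b₁ b₃ := (hG' b₁ b₃).2 ⟨h31.symm, Or.inr ⟨hb₁, hb₃, by
      rintro (⟨-, h⟩ | ⟨-, h⟩); exacts [h32 h, h31 h]⟩⟩
    have h32' : G'.Adj b₃ b₂ := (hG' b₃ b₂).2 ⟨h32, Or.inr ⟨hb₃, hb₂, by
      rintro (⟨h, -⟩ | ⟨h, -⟩); exacts [h31 h, h32 h]⟩⟩
    refine ⟨Walk.cons h13 (Walk.cons h32' Walk.nil), ?_⟩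
    simp [hwt'B _ _ hb₁ hb₃, hwt'B _ _ hb₃ hb₂, hsplit]

lemma exists_walkWeight_le_dist_of_redundant (hd : IsWalkDist G wt d)
    (hwt : ∀ u v, wt u v = wt v u) (hBP : B ⊆ P) (dP : V → V → ℝ)
    (hdP : ∀ x ∈ P, ∀ y ∈ P, IsLeast
      {r : ℝ | ∃ p : G.Walk x y, (∀ v ∈ p.support, v ∈ P) ∧ walkWeight wt p = r} (dP x y))
    (hredundant : dP b₁ b₂ = d b₁ b₂ ∨
      ∃ b₃ ∈ B, b₃ ≠ b₁ ∧ b₃ ≠ b₂ ∧ d b₁ b₂ = d b₁ b₃ + d b₃ b₂)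
    (hG' : ∀ u v : V, G'.Adj u v ↔ u ≠ v ∧
      ((G.Adj u v ∧ u ∈ P ∧ v ∈ P) ∨
        (u ∈ B ∧ v ∈ B ∧ ¬ ((u = b₁ ∧ v = b₂) ∨ (u = b₂ ∧ v = b₁)))))
    (hwt'B : ∀ u v : V, u ∈ B → v ∈ B → wt' u v = d u v)
    (hwt'E : ∀ u v : V, ¬ (u ∈ B ∧ v ∈ B) → wt' u v = wt u v) :
    ∀ u ∈ B, ∀ v ∈ B, ∃ q : G'.Walk u v, walkWeight wt' q ≤ d u v := by
  have hin := shortcut_adj_and_le_of_adj hd hG' hwt'B hwt'E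
  intro u hu v hv
  by_cases huv : u = v
  · subst huv
    exact ⟨Walk.nil, by simp [hd.self_eq_zero]⟩
  by_cases hpair : (u = b₁ ∧ v = b₂) ∨ (u = b₂ ∧ v = b₁)
  · rcases hpair with ⟨rfl, rfl⟩ | ⟨rfl, rfl⟩
    · exact exists_walkWeight_le_of_redundant hBP hin dP hdP hu hv hredundant hG' hwt'B
    · obtain ⟨q, hq⟩ :=
        exists_walkWeight_le_of_redundant hBP hin dP hdP hv hu hredundant hG' hwt'B
      refine ⟨q.reverse, ?_⟩
      rwa [walkWeight_reverse wt' (shortcut_weight_symm hd hwt hwt'B hwt'E), hd.symm hwt]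
  · exact ⟨Walk.cons ((hG' u v).2 ⟨huv, Or.inr ⟨hu, hv, hpair⟩⟩) Walk.nil,
      by simp [hwt'B u v hu hv]⟩

end Shortcut

theorem redundant_shortcut_omission_general {V : Type*}
    (G G' : SimpleGraph V) (wt wt' : V → V → ℝ)
    (hwsymm : ∀ u v, wt u v = wt v u)
    (d dP dP' : V → V → ℝ)
    (PA PB Vcut : Set V)
    (hpart : ∀ v : V, (v ∈ PA ∧ v ∉ PB ∧ v ∉ Vcut) ∨ (v ∈ PB ∧ v ∉ PA ∧ v ∉ Vcut) ∨
      (v ∈ Vcut ∧ v ∉ PA ∧ v ∉ PB))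
    (hsep : ∀ a ∈ PA, ∀ b ∈ PB, ¬ G.Adj a b)
    (P : Set V) (hP : P = PA ∨ P = PB)
    (B : Set V) (hB : B = {v : V | v ∈ P ∧ ∃ c ∈ Vcut, G.Adj v c})
    (hd : ∀ x y : V, IsLeast {r : ℝ | ∃ p : G.Walk x y, walkWeight wt p = r} (d x y))
    (hdP : ∀ x ∈ P, ∀ y ∈ P, IsLeast
      {r : ℝ | ∃ p : G.Walk x y, (∀ v ∈ p.support, v ∈ P) ∧ walkWeight wt p = r} (dP x y))
    (b₁ b₂ : V)
    -- the shortcut `(b₁, b₂)` is redundant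
    (hredundant : dP b₁ b₂ = d b₁ b₂ ∨
      ∃ b₃ ∈ B, b₃ ≠ b₁ ∧ b₃ ≠ b₂ ∧ d b₁ b₂ = d b₁ b₃ + d b₃ b₂)
    -- the enhanced graph with the shortcut `(b₁, b₂)` omitted
    (hG' : ∀ u v : V, G'.Adj u v ↔ u ≠ v ∧
      ((G.Adj u v ∧ u ∈ P ∧ v ∈ P) ∨
        (u ∈ B ∧ v ∈ B ∧ ¬ ((u = b₁ ∧ v = b₂) ∨ (u = b₂ ∧ v = b₁)))))
    (hwt'B : ∀ u v : V, u ∈ B → v ∈ B → wt' u v = d u v)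
    (hwt'E : ∀ u v : V, ¬ (u ∈ B ∧ v ∈ B) → wt' u v = wt u v)
    (hdP' : ∀ x ∈ P, ∀ y ∈ P, IsLeast
      {r : ℝ | ∃ p : G'.Walk x y, walkWeight wt' p = r} (dP' x y)) :
    ∀ x ∈ P, ∀ y ∈ P, dP' x y = d x y := by
  have hd : IsWalkDist G wt d := hd
  have hBP : B ⊆ P := by subst hB; exact fun v hv => hv.1
  have hcover : ∀ v, v ∈ PA ∨ v ∈ PB ∨ v ∈ Vcut := fun v => by
    rcases hpart v with h | h | h <;> simp [h.1]
  have hin := shortcut_adj_and_le_of_adj hd hG' hwt'B hwt'E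
  have hexit := mem_border_of_adj_of_notMem hcover hsep hP hB
  have hshort :=
    exists_walkWeight_le_dist_of_redundant hd hwsymm hBP dP hdP hredundant hG' hwt'B hwt'E
  intro x hx y hy
  obtain ⟨p, hp⟩ := hd.exists_walkWeight_eq x y
  obtain ⟨q, hq⟩ := (exists_walkWeight_le_of_border hd hin hexit hshort p hy).1 hx
  obtain ⟨q', hq'⟩ := (hdP' x hx y hy).1
  have hupper : dP' x y ≤ walkWeight wt' q := (hdP' x hx y hy).2 ⟨q, rfl⟩
  have hlower : d x y ≤ walkWeight wt' q' :=
    le_walkWeight_of_forall_adj (fun x => (hd.self_eq_zero x).le) hd.triangle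
      (dist_le_shortcut_weight hd hG' hwt'B hwt'E) q'
  linarith

/-- Redundant shortcuts may be omitted: if the shortcut between border vertices `b₁, b₂`
satisfies either (i) `d_{G[P]}(b₁,b₂) = d_G(b₁,b₂)`, or (ii) some third border vertex `b₃`
lies on a shortest path between `b₁` and `b₂`, then the shortcut-enhanced subgraph with
the shortcut `(b₁,b₂)` omitted is still distance-preserving on `P`. -/
theorem redundant_shortcut_omission {V : Type*} [Fintype V]
    (G G' : SimpleGraph V) (wt wt' : V → V → ℝ)
    (hwpos : ∀ u v, G.Adj u v → 0 < wt u v)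
    (hwsymm : ∀ u v, wt u v = wt v u)
    (d dP dP' : V → V → ℝ)
    (PA PB Vcut : Set V)
    (hpart : ∀ v : V, (v ∈ PA ∧ v ∉ PB ∧ v ∉ Vcut) ∨ (v ∈ PB ∧ v ∉ PA ∧ v ∉ Vcut) ∨
      (v ∈ Vcut ∧ v ∉ PA ∧ v ∉ PB))
    (hsep : ∀ a ∈ PA, ∀ b ∈ PB, ¬ G.Adj a b)
    (P : Set V) (hP : P = PA ∨ P = PB)
    (B : Set V) (hB : B = {v : V | v ∈ P ∧ ∃ c ∈ Vcut, G.Adj v c})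
    (hd : ∀ x y : V, IsLeast {r : ℝ | ∃ p : G.Walk x y, walkWeight wt p = r} (d x y))
    (hdP : ∀ x ∈ P, ∀ y ∈ P, IsLeast
      {r : ℝ | ∃ p : G.Walk x y, (∀ v ∈ p.support, v ∈ P) ∧ walkWeight wt p = r} (dP x y))
    (b₁ b₂ : V) (hb₁ : b₁ ∈ B) (hb₂ : b₂ ∈ B) (hb12 : b₁ ≠ b₂)
    -- the shortcut `(b₁, b₂)` is redundant
    (hredundant : dP b₁ b₂ = d b₁ b₂ ∨
      ∃ b₃ ∈ B, b₃ ≠ b₁ ∧ b₃ ≠ b₂ ∧ d b₁ b₂ = d b₁ b₃ + d b₃ b₂)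
    -- the enhanced graph with the shortcut `(b₁, b₂)` omitted
    (hG' : ∀ u v : V, G'.Adj u v ↔ u ≠ v ∧
      ((G.Adj u v ∧ u ∈ P ∧ v ∈ P) ∨
        (u ∈ B ∧ v ∈ B ∧ ¬ ((u = b₁ ∧ v = b₂) ∨ (u = b₂ ∧ v = b₁)))))
    (hwt'B : ∀ u v : V, u ∈ B → v ∈ B → wt' u v = d u v)
    (hwt'E : ∀ u v : V, ¬ (u ∈ B ∧ v ∈ B) → wt' u v = wt u v)
    (hdP' : ∀ x ∈ P, ∀ y ∈ P, IsLeast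
      {r : ℝ | ∃ p : G'.Walk x y, walkWeight wt' p = r} (dP' x y)) :
    ∀ x ∈ P, ∀ y ∈ P, dP' x y = d x y :=
  redundant_shortcut_omission_general G G' wt wt' hwsymm d dP dP' PA PB Vcut hpart hsep P hP B hB hd
    hdP b₁ b₂ hredundant hG' hwt'B hwt'E hdP'
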